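/- arXiv:1609.00885 — 3 statements merged into one kernel-verified Lean document; each statement's English description precedes it below -/
import Mathlib

section
/- Negative moment bound for inverse subordinators: Let S be a strictly increasing subordinator whose Bernstein function φ satisfies φ(r) ≤ c r^σ for all r>0, for some constants c>0, σ>0, and let S^{-1}(t) := inf{s≥0 : S(s)>t}. Then for every θ∈(0,1) and every t>0, E[(S^{-1}(t))^{−θ}] ≤ (1/(1−θ)) [2cΓ(σ+1)]^θ t^{−σθ}. -/
open MeasureTheory ProbabilityTheory Real Set Filter Topology

noncomputable section

/-- A subordinator with characteristic (Bernstein) exponent `φ`: a non-decreasing Lévy process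
`S` on `[0,∞)` with `S(0) = 0` and Laplace transform `E e^{−r S(t)} = e^{−t φ(r)}`. -/
structure IsSubordinator {Ω : Type*} [MeasurableSpace Ω] (μ : Measure Ω)
    (S : ℝ → Ω → ℝ) (φ : ℝ → ℝ) : Prop where
  measurable : ∀ t, Measurable (S t)
  zero : ∀ ω, S 0 ω = 0
  mono : ∀ ω, MonotoneOn (fun t => S t ω) (Set.Ici 0)
  nonneg : ∀ ω, ∀ t ≥ (0:ℝ), 0 ≤ S t ω
  indep_incr : ∀ (n : ℕ) (t : Fin (n + 1) → ℝ), Monotone t → (∀ i, 0 ≤ t i) →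
    iIndepFun
      (fun i : Fin n => fun ω => S (t i.succ) ω - S (t i.castSucc) ω) μ
  stat_incr : ∀ s t : ℝ, 0 ≤ s → 0 ≤ t →
    Measure.map (fun ω => S (s + t) ω - S s ω) μ = Measure.map (S t) μ
  laplace : ∀ r t : ℝ, 0 < r → 0 ≤ t →
    ∫ ω, Real.exp (-(r * S t ω)) ∂μ = Real.exp (-(t * φ r))

/-!
Markov's inequality for `x ↦ 1 - e^{-λx}` and the Laplace transform give
`(1 - e^{-u}) P(S(r) ≥ t) ≤ 1 - e^{-rφ(u/t)} ≤ c r (u/t)^σ` for every `u > 0`. Some `u > 0`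
satisfies `u^σ ≤ 2Γ(σ+1)(1 - e^{-u})`, since both sides have integral `Γ(σ+1)` against
`e^{-u} du`; hence `P(S^{-1}(t) < r) ≤ P(S(r) ≥ t) ≤ K r` with `K = 2cΓ(σ+1)t^{-σ}`. So the tail
of `S^{-1}(t)^{-θ}` at `x` is at most `min(1, K x^{-1/θ})`, and the layer-cake formula bounds the
moment by `∫₀^∞ min(1, K x^{-1/θ}) dx = K^θ / (1 - θ)`.
-/

theorem integrableOn_exp_neg_sub_exp_neg_two_mul :
    IntegrableOn (fun u => exp (-u) - exp (-2 * u)) (Ioi (0:ℝ)) :=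
  (integrableOn_exp_neg_Ioi 0).sub (integrableOn_exp_mul_Ioi (by norm_num) 0)

theorem integral_exp_neg_sub_exp_neg_two_mul :
    ∫ u in Ioi (0:ℝ), (exp (-u) - exp (-2 * u)) = 1 / 2 := by
  rw [integral_sub (integrableOn_exp_neg_Ioi 0) (integrableOn_exp_mul_Ioi (by norm_num) 0),
    integral_exp_neg_Ioi_zero, integral_exp_mul_Ioi (by norm_num)]
  norm_num

theorem exists_rpow_le_two_mul_Gamma_mul_one_sub_exp_neg {σ : ℝ} (hσ : 0 < σ) :
    ∃ u > 0, u ^ σ ≤ 2 * Gamma (σ + 1) * (1 - exp (-u)) := by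
  by_contra! h
  set F : ℝ → ℝ := fun u => exp (-u) * u ^ σ - 2 * Gamma (σ + 1) * (exp (-u) - exp (-2 * u))
  have hΓ : IntegrableOn (fun u => exp (-u) * u ^ σ) (Ioi 0) := by
    simpa using GammaIntegral_convergent (s := σ + 1) (by linarith)
  have hF_int : IntegrableOn F (Ioi 0) :=
    hΓ.sub (integrableOn_exp_neg_sub_exp_neg_two_mul.const_mul _)
  have hF_pos : ∀ u ∈ Ioi (0:ℝ), 0 < F u := by
    intro u hu
    have := mul_pos (exp_pos (-u)) (sub_pos.2 (h u hu))
    simp only [F, show -2 * u = -u + -u by ring, exp_add]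
    linarith
  have hF_zero : ∫ u in Ioi 0, F u = 0 := by
    rw [integral_sub hΓ (integrableOn_exp_neg_sub_exp_neg_two_mul.const_mul _), integral_const_mul,
      integral_exp_neg_sub_exp_neg_two_mul, Gamma_eq_integral (by linarith : 0 < σ + 1),
      add_sub_cancel_right]
    ring
  have hF_int_pos : 0 < ∫ u in Ioi 0, F u := by
    rw [setIntegral_pos_iff_support_of_nonneg_ae
      ((ae_restrict_iff' measurableSet_Ioi).2 (.of_forall fun u hu => (hF_pos u hu).le)) hF_int,
      inter_eq_right.2 fun u hu => Function.mem_support.2 (hF_pos u hu).ne', volume_Ioi]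
    exact ENNReal.zero_lt_top
  exact hF_int_pos.ne' hF_zero

theorem setLIntegral_Ioi_min_one_rpow_le {K p : ℝ} (hK : 0 < K) (hp : 1 < p) :
    ∫⁻ x in Ioi 0, min 1 (ENNReal.ofReal (K * x ^ (-p))) ≤
      ENNReal.ofReal (p / (p - 1) * K ^ p⁻¹) := by
  set a := K ^ p⁻¹
  have ha : 0 < a := rpow_pos_of_pos hK _
  have hp' : -p < -1 := neg_lt_neg hp
  -- `K * a ^ (-p) = 1`: the two bounds cross at `a`.
  have hKa : K * a ^ (-p + 1) = a := by
    rw [rpow_add ha, rpow_one, ← rpow_mul hK.le, mul_neg, inv_mul_cancel₀ (by linarith),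
      rpow_neg_one, mul_inv_cancel_left₀ hK.ne']
  have hhead : ∫⁻ x in Ioc 0 a, min 1 (ENNReal.ofReal (K * x ^ (-p))) ≤ ENNReal.ofReal a :=
    calc _ ≤ ∫⁻ _ in Ioc 0 a, 1 := lintegral_mono fun _ => min_le_left _ _
      _ = ENNReal.ofReal a := by rw [setLIntegral_one, Real.volume_Ioc, sub_zero]
  have htail : ∫⁻ x in Ioi a, min 1 (ENNReal.ofReal (K * x ^ (-p))) ≤
      ENNReal.ofReal (a / (p - 1)) :=
    calc _ ≤ ∫⁻ x in Ioi a, ENNReal.ofReal (K * x ^ (-p)) :=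
          lintegral_mono fun _ => min_le_right _ _
      _ = ENNReal.ofReal (∫ x in Ioi a, K * x ^ (-p)) := by
          rw [ofReal_integral_eq_lintegral_ofReal
            ((integrableOn_Ioi_rpow_of_lt hp' ha).const_mul K)]
          exact (ae_restrict_iff' measurableSet_Ioi).2 (.of_forall fun x hx =>
            mul_nonneg hK.le (rpow_nonneg (ha.trans hx).le _))
      _ = ENNReal.ofReal (a / (p - 1)) := by
          rw [integral_const_mul, integral_Ioi_rpow_of_lt hp' ha, mul_div_assoc', mul_neg, hKa,
            show -p + 1 = -(p - 1) by ring, div_neg, neg_div, neg_neg]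
  calc _ = (∫⁻ x in Ioc 0 a, min 1 (ENNReal.ofReal (K * x ^ (-p)))) +
        ∫⁻ x in Ioi a, min 1 (ENNReal.ofReal (K * x ^ (-p))) := by
        rw [← lintegral_union measurableSet_Ioi (Ioc_disjoint_Ioi le_rfl),
          Ioc_union_Ioi_eq_Ioi ha.le]
    _ ≤ ENNReal.ofReal a + ENNReal.ofReal (a / (p - 1)) := add_le_add hhead htail
    _ = ENNReal.ofReal (p / (p - 1) * a) := by
        have hp1 : p - 1 ≠ 0 := by linarith
        rw [← ENNReal.ofReal_add ha.le (div_nonneg ha.le (by linarith))]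
        congr 1
        field_simp
        ring

section FirstPassageTime

/-- Since `sInf ∅ = 0` in `ℝ`, a path that never exceeds `t` has first passage time `0`, not `∞`. -/
def firstPassageTime (f : ℝ → ℝ) (t : ℝ) : ℝ := sInf {s | 0 ≤ s ∧ t < f s}

variable {f : ℝ → ℝ} {t : ℝ}

theorem firstPassageTime_nonneg (f : ℝ → ℝ) (t : ℝ) : 0 ≤ firstPassageTime f t :=
  Real.sInf_nonneg fun _ hs => hs.1

theorem lt_of_firstPassageTime_lt (hf : MonotoneOn f (Ici 0)) {r : ℝ}
    (h0 : 0 < firstPassageTime f t) (hr : firstPassageTime f t < r) : t < f r := by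
  have hne : {s | 0 ≤ s ∧ t < f s}.Nonempty := by
    by_contra hempty
    rw [not_nonempty_iff_eq_empty] at hempty
    simp [firstPassageTime, hempty] at h0
  obtain ⟨s, ⟨hs0, hts⟩, hsr⟩ := (csInf_lt_iff ⟨0, fun _ hs => hs.1⟩ hne).1 hr
  exact hts.trans_le (hf hs0 (hs0.trans hsr.le) hsr.le)

theorem firstPassageTime_lt_iff (hf : MonotoneOn f (Ici 0)) {q : ℝ} :
    firstPassageTime f t < q ↔
      (∃ s : ℚ, 0 ≤ (s : ℝ) ∧ (s : ℝ) < q ∧ t < f s) ∨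
        (0 < q ∧ ∀ s : ℚ, 0 ≤ (s : ℝ) → f s ≤ t) := by
  have hrat : ∀ s q, 0 ≤ s → t < f s → s < q →
      ∃ s' : ℚ, 0 ≤ (s' : ℝ) ∧ (s' : ℝ) < q ∧ t < f s' := by
    intro s q hs0 hts hsq
    obtain ⟨s', hss', hs'q⟩ := exists_rat_btwn hsq
    exact ⟨s', hs0.trans hss'.le, hs'q, hts.trans_le (hf hs0 (hs0.trans hss'.le) hss'.le)⟩
  rcases {s | 0 ≤ s ∧ t < f s}.eq_empty_or_nonempty with hempty | ⟨s₀, hs₀, hts₀⟩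
  · have hle : ∀ s : ℚ, 0 ≤ (s : ℝ) → f s ≤ t := fun s hs => not_lt.1 fun hts =>
      hempty.subset ⟨hs, hts⟩
    rw [firstPassageTime, hempty, Real.sInf_empty]
    refine ⟨fun hq => .inr ⟨hq, hle⟩, ?_⟩
    rintro (⟨s, hs0, hsq, -⟩ | ⟨hq, -⟩)
    exacts [hs0.trans_lt hsq, hq]
  · have hnot : ¬ (0 < q ∧ ∀ s : ℚ, 0 ≤ (s : ℝ) → f s ≤ t) := by
      rintro ⟨-, hle⟩
      obtain ⟨s, hs, -, hts⟩ := hrat s₀ (s₀ + 1) hs₀ hts₀ (lt_add_one s₀)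
      exact (hle s hs).not_gt hts
    rw [or_iff_left hnot, firstPassageTime,
      csInf_lt_iff (⟨0, fun _ hs => hs.1⟩ : BddBelow {s | 0 ≤ s ∧ t < f s}) ⟨s₀, hs₀, hts₀⟩]
    constructor
    · rintro ⟨s, ⟨hs0, hts⟩, hsq⟩
      exact hrat s q hs0 hts hsq
    · rintro ⟨s, hs0, hsq, hts⟩
      exact ⟨s, ⟨hs0, hts⟩, hsq⟩

theorem measurable_firstPassageTime {Ω : Type*} [MeasurableSpace Ω] {S : ℝ → Ω → ℝ}
    (hS : ∀ s, Measurable (S s)) (hmono : ∀ ω, MonotoneOn (S · ω) (Ici 0)) (t : ℝ) :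
    Measurable fun ω => firstPassageTime (S · ω) t := by
  refine measurable_of_Iio fun q => ?_
  simp_rw [preimage, mem_Iio, firstPassageTime_lt_iff (hmono _)]
  measurability

end FirstPassageTime

section Tail

variable {Ω : Type*} [MeasurableSpace Ω] {μ : Measure Ω} [IsProbabilityMeasure μ]

theorem mul_measureReal_le_le_one_sub_integral_exp_neg {X : Ω → ℝ} (hX : Measurable X)
    (hX0 : ∀ ω, 0 ≤ X ω) {lam t : ℝ} (hlam : 0 ≤ lam) (ht : 0 ≤ t) :
    (1 - exp (-(lam * t))) * μ.real {ω | t ≤ X ω} ≤ 1 - ∫ ω, exp (-(lam * X ω)) ∂μ := by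
  have hexp_le_one : ∀ ω, exp (-(lam * X ω)) ≤ 1 := fun ω =>
    exp_le_one_iff.2 (neg_nonpos.2 (mul_nonneg hlam (hX0 ω)))
  have hint : Integrable (fun ω => exp (-(lam * X ω))) μ :=
    .of_bound (by fun_prop) 1 (.of_forall fun ω => by
      rw [norm_of_nonneg (exp_pos _).le]; exact hexp_le_one ω)
  have hmarkov := mul_meas_ge_le_integral_of_nonneg
    (.of_forall fun ω => sub_nonneg.2 (hexp_le_one ω)) ((integrable_const 1).sub hint)
    (1 - exp (-(lam * t)))
  rw [integral_sub (integrable_const 1) hint, integral_const, probReal_univ, one_smul] at hmarkov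
  refine le_trans (mul_le_mul_of_nonneg_left (measureReal_mono fun ω hω => ?_) ?_) hmarkov
  · have : lam * t ≤ lam * X ω := mul_le_mul_of_nonneg_left hω hlam
    simp only [mem_ofPred_eq, sub_le_sub_iff_left, exp_le_exp]
    linarith
  · exact sub_nonneg.2 (exp_le_one_iff.2 (neg_nonpos.2 (mul_nonneg hlam ht)))

theorem lintegral_ofReal_le_of_meas_lt_le_rpow {Y : Ω → ℝ} (hY : AEMeasurable Y μ)
    (hY0 : 0 ≤ᵐ[μ] Y) {K p : ℝ} (hK : 0 < K) (hp : 1 < p)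
    (htail : ∀ x > 0, μ {ω | x < Y ω} ≤ ENNReal.ofReal (K * x ^ (-p))) :
    ∫⁻ ω, ENNReal.ofReal (Y ω) ∂μ ≤ ENNReal.ofReal (p / (p - 1) * K ^ p⁻¹) :=
  calc _ = ∫⁻ x in Ioi 0, μ {ω | x < Y ω} := lintegral_eq_lintegral_meas_lt μ hY0 hY
    _ ≤ ∫⁻ x in Ioi 0, min 1 (ENNReal.ofReal (K * x ^ (-p))) :=
        setLIntegral_mono' measurableSet_Ioi fun x hx => le_min prob_le_one (htail x hx)
    _ ≤ _ := setLIntegral_Ioi_min_one_rpow_le hK hp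

theorem IsSubordinator.measure_le_apply_le {S : ℝ → Ω → ℝ} {φ : ℝ → ℝ}
    (hsub : IsSubordinator μ S φ) {c σ : ℝ} (hc : 0 ≤ c) (hσ : 0 < σ)
    (hφ : ∀ r > (0:ℝ), φ r ≤ c * r ^ σ) {t r : ℝ} (ht : 0 < t) (hr : 0 ≤ r) :
    μ {ω | t ≤ S r ω} ≤ ENNReal.ofReal (2 * c * Gamma (σ + 1) * t ^ (-σ) * r) := by
  obtain ⟨u, hu, hu_le⟩ := exists_rpow_le_two_mul_Gamma_mul_one_sub_exp_neg hσ
  set ε := 1 - exp (-u)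
  have hε : 0 < ε := sub_pos.2 (exp_lt_one_iff.2 (neg_lt_zero.2 hu))
  have hlam : 0 < u / t := div_pos hu ht
  have hmarkov := mul_measureReal_le_le_one_sub_integral_exp_neg (μ := μ) (hsub.measurable r)
    (fun ω => hsub.nonneg ω r hr) hlam.le ht.le
  rw [div_mul_cancel₀ u ht.ne', hsub.laplace _ _ hlam hr] at hmarkov
  have hbound : ε * μ.real {ω | t ≤ S r ω} ≤ ε * (2 * c * Gamma (σ + 1) * t ^ (-σ) * r) :=
    calc ε * μ.real {ω | t ≤ S r ω}
        ≤ 1 - exp (-(r * φ (u / t))) := hmarkov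
      _ ≤ r * φ (u / t) := by linarith [add_one_le_exp (-(r * φ (u / t)))]
      _ ≤ r * (c * (u ^ σ * t ^ (-σ))) := by
          rw [rpow_neg ht.le, ← div_eq_mul_inv, ← div_rpow hu.le ht.le]
          exact mul_le_mul_of_nonneg_left (hφ _ hlam) hr
      _ ≤ r * (c * (2 * Gamma (σ + 1) * ε * t ^ (-σ))) := by gcongr
      _ = ε * (2 * c * Gamma (σ + 1) * t ^ (-σ) * r) := by ring
  rw [← ofReal_measureReal]
  exact ENNReal.ofReal_le_ofReal (le_of_mul_le_mul_left hbound hε)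

end Tail

theorem negative_moment_inverse_subordinator_general
    {Ω : Type*} [MeasurableSpace Ω] (μ : Measure Ω) [IsProbabilityMeasure μ]
    (S : ℝ → Ω → ℝ) (φ : ℝ → ℝ) (hsub : IsSubordinator μ S φ)
    (c σ : ℝ) (hc : 0 < c) (hσ : 0 < σ) (hφ : ∀ r > (0:ℝ), φ r ≤ c * r ^ σ)
    (θ : ℝ) (hθ : θ ∈ Set.Ioo (0:ℝ) 1) (t : ℝ) (ht : 0 < t) :
    ∫⁻ ω, ENNReal.ofReal ((sInf {s : ℝ | 0 ≤ s ∧ t < S s ω}) ^ (-θ)) ∂μ ≤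
      ENNReal.ofReal ((1 / (1 - θ)) * (2 * c * Real.Gamma (σ + 1)) ^ θ *
        t ^ (-(σ * θ))) := by
  obtain ⟨hθ0, hθ1⟩ := hθ
  set T : Ω → ℝ := fun ω => firstPassageTime (S · ω) t
  have hΓ : 0 < Gamma (σ + 1) := Gamma_pos_of_pos (by linarith)
  set K := 2 * c * Gamma (σ + 1) * t ^ (-σ)
  have hK : 0 < K := by positivity
  have htail : ∀ x > 0, μ {ω | x < T ω ^ (-θ)} ≤ ENNReal.ofReal (K * x ^ (-θ⁻¹)) := by
    intro x hx
    refine (measure_mono fun ω hω => ?_).trans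
      (hsub.measure_le_apply_le hc.le hσ hφ ht (rpow_nonneg hx.le _))
    have hT : 0 < T ω := (firstPassageTime_nonneg _ t).lt_of_ne' fun h0 => by
      simp [T, h0, zero_rpow (neg_ne_zero.2 hθ0.ne'), hx.not_gt] at hω
    rw [← inv_neg]
    exact (lt_of_firstPassageTime_lt (hsub.mono ω) hT
      ((lt_rpow_inv_iff_of_neg hT hx (neg_neg_of_pos hθ0)).2 hω)).le
  calc ∫⁻ ω, ENNReal.ofReal (T ω ^ (-θ)) ∂μ
      ≤ ENNReal.ofReal (θ⁻¹ / (θ⁻¹ - 1) * K ^ θ⁻¹⁻¹) :=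
        lintegral_ofReal_le_of_meas_lt_le_rpow
          ((measurable_firstPassageTime hsub.measurable hsub.mono t).pow_const _).aemeasurable
          (.of_forall fun ω => rpow_nonneg (firstPassageTime_nonneg _ t) _) hK
          ((one_lt_inv₀ hθ0).2 hθ1) htail
    _ = _ := by
        rw [inv_inv, mul_rpow (by positivity) (rpow_nonneg ht.le _), ← rpow_mul ht.le, neg_mul]
        congr 1
        field_simp

/-- **Negative moment bound for inverse subordinators** (Lemma 3.6): if `S` is a strictly
increasing subordinator whose Bernstein function `φ` satisfies `φ(r) ≤ c r^σ` for all `r>0`,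
then for every `θ ∈ (0,1)` and `t>0`,
`E[(S^{-1}(t))^{−θ}] ≤ (1/(1−θ)) [2cΓ(σ+1)]^θ t^{−σθ}`,
where `S^{-1}(t) = inf{s ≥ 0 : S(s) > t}`. -/
theorem negative_moment_inverse_subordinator
    {Ω : Type*} [MeasurableSpace Ω] (μ : Measure Ω) [IsProbabilityMeasure μ]
    (S : ℝ → Ω → ℝ) (φ : ℝ → ℝ) (hsub : IsSubordinator μ S φ)
    (hstrict : ∀ᵐ ω ∂μ, StrictMonoOn (fun t => S t ω) (Set.Ici 0))
    (c σ : ℝ) (hc : 0 < c) (hσ : 0 < σ) (hφ : ∀ r > (0:ℝ), φ r ≤ c * r ^ σ)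
    (θ : ℝ) (hθ : θ ∈ Set.Ioo (0:ℝ) 1) (t : ℝ) (ht : 0 < t) :
    ∫⁻ ω, ENNReal.ofReal ((sInf {s : ℝ | 0 ≤ s ∧ t < S s ω}) ^ (-θ)) ∂μ ≤
      ENNReal.ofReal ((1 / (1 - θ)) * (2 * c * Real.Gamma (σ + 1)) ^ θ *
        t ^ (-(σ * θ))) :=
  negative_moment_inverse_subordinator_general μ S φ hsub c σ hc hσ hφ θ hθ t ht

end
end

section
/- Tail bound for subordinators with polynomially bounded Bernstein function: Let S be a subordinator whose Bernstein function φ satisfies φ(r) ≤ c r^σ for all r>0, for some constants c>0, σ>0. Then for all s,t>0, P(S(s) ≥ t) ≤ 2cΓ(σ+1) s t^{−σ}. -/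
/-!
Write `X = S(s)`. Since `1_{[t,∞)}(X) ≤ 2X/(t+X)` and
`X/(t+X) = ∫₀^∞ (1 - e^{-rX/t}) e^{-r} dr`, Tonelli bounds `P(X ≥ t)` by
`2 ∫₀^∞ (1 - E e^{-(r/t)X}) e^{-r} dr`. The Laplace transform gives
`1 - E e^{-aX} = 1 - e^{-sφ(a)} ≤ sφ(a) ≤ s c a^σ`, and the remaining integral
`∫₀^∞ (r/t)^σ e^{-r} dr` is `Γ(σ+1) t^{-σ}`.
-/

open MeasureTheory ProbabilityTheory Real Set Filter Topology

noncomputable section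

theorem one_sub_exp_neg_mul_mul_exp_neg (b r : ℝ) :
    (1 - exp (-(b * r))) * exp (-r) = exp (-r) - exp (-(1 + b) * r) := by
  rw [sub_mul, one_mul, ← exp_add]
  ring_nf

theorem integrableOn_one_sub_exp_neg_mul_mul_exp_neg {b : ℝ} (hb : -1 < b) :
    IntegrableOn (fun r => (1 - exp (-(b * r))) * exp (-r)) (Ioi 0) := by
  simp_rw [one_sub_exp_neg_mul_mul_exp_neg]
  exact (integrableOn_exp_neg_Ioi 0).sub (exp_neg_integrableOn_Ioi 0 (by linarith))

theorem integral_one_sub_exp_neg_mul_mul_exp_neg {b : ℝ} (hb : -1 < b) :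
    ∫ r in Ioi 0, (1 - exp (-(b * r))) * exp (-r) = b / (1 + b) := by
  have h1b : 0 < 1 + b := by linarith
  simp_rw [one_sub_exp_neg_mul_mul_exp_neg]
  rw [integral_sub (integrableOn_exp_neg_Ioi 0) (exp_neg_integrableOn_Ioi 0 h1b),
    integral_exp_neg_Ioi_zero, integral_exp_mul_Ioi (by linarith)]
  field_simp
  simp

theorem ofReal_div_add_eq_lintegral {x t : ℝ} (hx : 0 ≤ x) (ht : 0 < t) :
    ENNReal.ofReal (x / (t + x)) =
      ∫⁻ r in Ioi 0, ENNReal.ofReal (1 - exp (-(r / t * x))) * ENNReal.ofReal (exp (-r)) := by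
  have hxt : 0 ≤ x / t := div_nonneg hx ht.le
  have hb : -1 < x / t := by linarith
  have hnonneg :
      0 ≤ᵐ[volume.restrict (Ioi 0)] fun r => (1 - exp (-(x / t * r))) * exp (-r) := by
    filter_upwards [ae_restrict_mem measurableSet_Ioi] with r (hr : 0 < r)
    have : exp (-(x / t * r)) ≤ 1 := exp_le_one_iff.mpr (by nlinarith)
    exact mul_nonneg (by linarith) (exp_pos _).le
  have hx_div : x / (t + x) = x / t / (1 + x / t) := by field_simp
  rw [hx_div, ← integral_one_sub_exp_neg_mul_mul_exp_neg hb,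
    ofReal_integral_eq_lintegral_ofReal (integrableOn_one_sub_exp_neg_mul_mul_exp_neg hb) hnonneg]
  refine lintegral_congr fun r => ?_
  rw [ENNReal.ofReal_mul' (exp_pos _).le, div_mul_comm]

theorem lintegral_ofReal_exp_neg_mul_rpow {σ : ℝ} (hσ : -1 < σ) :
    ∫⁻ r in Ioi 0, ENNReal.ofReal (exp (-r) * r ^ σ) = ENNReal.ofReal (Gamma (σ + 1)) := by
  have hσ1 : 0 < σ + 1 := by linarith
  have hnonneg : 0 ≤ᵐ[volume.restrict (Ioi 0)] fun r : ℝ => exp (-r) * r ^ σ := by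
    filter_upwards [ae_restrict_mem measurableSet_Ioi] with r (hr : 0 < r)
    positivity
  have hintegrable := GammaIntegral_convergent hσ1
  rw [add_sub_cancel_right] at hintegrable
  rw [Gamma_eq_integral hσ1, add_sub_cancel_right,
    ← ofReal_integral_eq_lintegral_ofReal hintegrable hnonneg]

section RandomVariable

variable {Ω : Type*} [MeasurableSpace Ω] {μ : Measure Ω} {X : Ω → ℝ}

theorem measure_le_le_two_mul_lintegral_div_add (hX : Measurable X) (hX0 : ∀ ω, 0 ≤ X ω)
    {t : ℝ} (ht : 0 < t) :
    μ {ω | t ≤ X ω} ≤ 2 * ∫⁻ ω, ENNReal.ofReal (X ω / (t + X ω)) ∂μ := by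
  rw [← lintegral_indicator_one (measurableSet_le measurable_const hX),
    ← lintegral_const_mul' _ _ ENNReal.ofNat_ne_top]
  refine lintegral_mono fun ω => ?_
  by_cases htX : ω ∈ {ω | t ≤ X ω}
  · have h : (1 : ℝ) ≤ 2 * (X ω / (t + X ω)) := by
      rw [← mul_div_assoc, le_div_iff₀ (by linarith [hX0 ω])]
      linarith [show t ≤ X ω from htX]
    rw [indicator_of_mem htX, ← ENNReal.ofReal_ofNat 2, ← ENNReal.ofReal_mul zero_le_two]
    exact ENNReal.one_le_ofReal.mpr h
  · rw [indicator_of_notMem htX]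
    exact zero_le

theorem lintegral_ofReal_div_add_eq [SFinite μ] (hX : Measurable X) (hX0 : ∀ ω, 0 ≤ X ω)
    {t : ℝ} (ht : 0 < t) :
    ∫⁻ ω, ENNReal.ofReal (X ω / (t + X ω)) ∂μ =
      ∫⁻ r in Ioi 0, (∫⁻ ω, ENNReal.ofReal (1 - exp (-(r / t * X ω))) ∂μ) *
        ENNReal.ofReal (exp (-r)) := by
  simp_rw [ofReal_div_add_eq_lintegral (hX0 _) ht]
  rw [lintegral_lintegral_swap (by fun_prop)]
  simp_rw [lintegral_mul_const' _ _ ENNReal.ofReal_ne_top]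

theorem lintegral_ofReal_one_sub_exp_neg_mul [IsProbabilityMeasure μ] (hX : Measurable X)
    (hX0 : ∀ ω, 0 ≤ X ω) {a : ℝ} (ha : 0 ≤ a) :
    ∫⁻ ω, ENNReal.ofReal (1 - exp (-(a * X ω))) ∂μ =
      ENNReal.ofReal (1 - ∫ ω, exp (-(a * X ω)) ∂μ) := by
  have hle : ∀ ω, exp (-(a * X ω)) ≤ 1 := fun ω =>
    exp_le_one_iff.mpr (neg_nonpos.mpr (mul_nonneg ha (hX0 ω)))
  have hint : Integrable (fun ω => exp (-(a * X ω))) μ :=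
    Integrable.of_bound (by fun_prop) 1 (Eventually.of_forall fun ω => by
      rw [norm_of_nonneg (exp_pos _).le]
      exact hle ω)
  have hint_sub : Integrable (fun ω => 1 - exp (-(a * X ω))) μ := (integrable_const 1).sub hint
  rw [← ofReal_integral_eq_lintegral_ofReal hint_sub
      (Eventually.of_forall fun ω => sub_nonneg.mpr (hle ω)),
    integral_sub (integrable_const 1) hint, integral_const, probReal_univ, one_smul]

theorem measure_le_le_of_one_sub_integral_exp_neg_le [IsProbabilityMeasure μ]
    (hX : Measurable X) (hX0 : ∀ ω, 0 ≤ X ω) {K σ : ℝ} (hσ : -1 < σ)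
    (hK : ∀ a > 0, 1 - ∫ ω, exp (-(a * X ω)) ∂μ ≤ K * a ^ σ) {t : ℝ} (ht : 0 < t) :
    μ {ω | t ≤ X ω} ≤ ENNReal.ofReal (2 * K * Gamma (σ + 1) * t ^ (-σ)) := by
  have hpointwise : ∀ r > 0,
      (∫⁻ ω, ENNReal.ofReal (1 - exp (-(r / t * X ω))) ∂μ) * ENNReal.ofReal (exp (-r)) ≤
        ENNReal.ofReal (K * t ^ (-σ)) * ENNReal.ofReal (exp (-r) * r ^ σ) := by
    intro r hr
    have hrt : 0 < r / t := div_pos hr ht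
    have hscale : K * (r / t) ^ σ * exp (-r) = K * t ^ (-σ) * (exp (-r) * r ^ σ) := by
      rw [div_rpow hr.le ht.le, rpow_neg ht.le]
      ring
    rw [lintegral_ofReal_one_sub_exp_neg_mul hX hX0 hrt.le,
      ← ENNReal.ofReal_mul' (exp_pos _).le, ← ENNReal.ofReal_mul' (by positivity), ← hscale]
    exact ENNReal.ofReal_le_ofReal
      (mul_le_mul_of_nonneg_right (hK _ hrt) (exp_pos _).le)
  calc μ {ω | t ≤ X ω}
      ≤ 2 * ∫⁻ ω, ENNReal.ofReal (X ω / (t + X ω)) ∂μ :=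
        measure_le_le_two_mul_lintegral_div_add hX hX0 ht
    _ ≤ 2 * ∫⁻ r in Ioi 0,
          ENNReal.ofReal (K * t ^ (-σ)) * ENNReal.ofReal (exp (-r) * r ^ σ) := by
        rw [lintegral_ofReal_div_add_eq hX hX0 ht]
        gcongr 2 * ?_
        exact setLIntegral_mono_ae' measurableSet_Ioi
          (Eventually.of_forall fun r hr => hpointwise r hr)
    _ = ENNReal.ofReal (2 * K * Gamma (σ + 1) * t ^ (-σ)) := by
        rw [lintegral_const_mul' _ _ ENNReal.ofReal_ne_top,
          lintegral_ofReal_exp_neg_mul_rpow hσ,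
          ← ENNReal.ofReal_mul' (Gamma_nonneg_of_nonneg (by linarith)),
          ← ENNReal.ofReal_ofNat 2, ← ENNReal.ofReal_mul zero_le_two]
        ring_nf

end RandomVariable

theorem IsSubordinator.one_sub_integral_exp_neg_le {Ω : Type*} [MeasurableSpace Ω]
    {μ : Measure Ω} {S : ℝ → Ω → ℝ} {φ : ℝ → ℝ} (hS : IsSubordinator μ S φ) {r t : ℝ}
    (hr : 0 < r) (ht : 0 ≤ t) :
    1 - ∫ ω, exp (-(r * S t ω)) ∂μ ≤ t * φ r := by
  rw [hS.laplace r t hr ht]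
  linarith [add_one_le_exp (-(t * φ r))]

theorem tail_bound_subordinator_general
    {Ω : Type*} [MeasurableSpace Ω] (μ : Measure Ω) [IsProbabilityMeasure μ]
    (S : ℝ → Ω → ℝ) (φ : ℝ → ℝ) (hsub : IsSubordinator μ S φ)
    (c σ : ℝ) (hσ : 0 < σ) (hφ : ∀ r > (0:ℝ), φ r ≤ c * r ^ σ)
    (s t : ℝ) (hs : 0 < s) (ht : 0 < t) :
    μ {ω | t ≤ S s ω} ≤
      ENNReal.ofReal (2 * c * Real.Gamma (σ + 1) * s * t ^ (-σ)) := by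
  have hlaplace : ∀ a > 0, 1 - ∫ ω, exp (-(a * S s ω)) ∂μ ≤ s * c * a ^ σ := fun a ha =>
    calc 1 - ∫ ω, exp (-(a * S s ω)) ∂μ
        ≤ s * φ a := hsub.one_sub_integral_exp_neg_le ha hs.le
      _ ≤ s * (c * a ^ σ) := mul_le_mul_of_nonneg_left (hφ a ha) hs.le
      _ = s * c * a ^ σ := (mul_assoc _ _ _).symm
  calc μ {ω | t ≤ S s ω}
      ≤ ENNReal.ofReal (2 * (s * c) * Gamma (σ + 1) * t ^ (-σ)) :=
        measure_le_le_of_one_sub_integral_exp_neg_le (hsub.measurable s)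
          (fun ω => hsub.nonneg ω s hs.le) (by linarith) hlaplace ht
    _ = ENNReal.ofReal (2 * c * Real.Gamma (σ + 1) * s * t ^ (-σ)) := by ring_nf

/-- **Tail bound for subordinators with polynomially bounded Bernstein function** (first part
of the proof of Lemma 3.6): if `S` is a subordinator whose Bernstein function `φ` satisfies
`φ(r) ≤ c r^σ` for all `r>0`, then for all `s,t>0`,
`P(S(s) ≥ t) ≤ 2cΓ(σ+1) s t^{−σ}`. -/
theorem tail_bound_subordinator
    {Ω : Type*} [MeasurableSpace Ω] (μ : Measure Ω) [IsProbabilityMeasure μ]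
    (S : ℝ → Ω → ℝ) (φ : ℝ → ℝ) (hsub : IsSubordinator μ S φ)
    (c σ : ℝ) (hc : 0 < c) (hσ : 0 < σ) (hφ : ∀ r > (0:ℝ), φ r ≤ c * r ^ σ)
    (s t : ℝ) (hs : 0 < s) (ht : 0 < t) :
    μ {ω | t ≤ S s ω} ≤
      ENNReal.ofReal (2 * c * Real.Gamma (σ + 1) * s * t ^ (-σ)) :=
  tail_bound_subordinator_general μ S φ hsub c σ hσ hφ s t hs ht

end
end

section
/- Infinite exponential negative moments for inverse α-stable subordinators: Let S be a strictly increasing subordinator such that for some α∈(0,1) and some constant c>0, P(S(r) ≥ t) ≥ c (1 ∧ r t^{−α}) for all r,t>0 (as holds for the α-stable subordinator), and let Z(t) = S^{-1}(t) := inf{s≥0 : S(s)>t}. Then for all t>0, θ>0 and δ>0, E exp[δ Z(t)^{−θ}] = ∞. -/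
open MeasureTheory ProbabilityTheory Real Set Filter Topology

noncomputable section

/-! On the event `{S(r) > t}` the first passage time `Z(t)` is at most `r`, and it is almost surely
positive because `P(S(r') ≥ t) → 0` as `r' → 0` (read off the Laplace transform). Hence
`E exp[δ Z(t)^{−θ}] ≥ exp(δ r^{−θ}) P(S(r) > t) ≳ exp(δ r^{−θ}) r`, which blows up as `r → 0`. -/

theorem MonotoneOn.sInf_setOf_lt_mem_Icc {f : ℝ → ℝ} (hf : MonotoneOn f (Ici 0))
    {t r r' : ℝ} (hr' : 0 ≤ r') (hfr' : f r' ≤ t) (hr : 0 ≤ r) (hfr : t < f r) :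
    sInf {s | 0 ≤ s ∧ t < f s} ∈ Icc r' r := by
  have hmem : r ∈ {s | 0 ≤ s ∧ t < f s} := ⟨hr, hfr⟩
  refine ⟨le_csInf ⟨r, hmem⟩ fun s ⟨hs, hts⟩ => ?_, csInf_le ⟨0, fun s hs => hs.1⟩ hmem⟩
  by_contra! hsr'
  exact (hts.trans_le (hf hs hr' hsr'.le)).not_ge hfr'

theorem tendsto_exp_mul_rpow_neg_mul_self {δ θ : ℝ} (hδ : 0 < δ) (hθ : 0 < θ) :
    Tendsto (fun r => exp (δ * r ^ (-θ)) * r) (𝓝[>] 0) atTop := by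
  have hu : Tendsto (fun r : ℝ => δ * r ^ (-θ)) (𝓝[>] 0) atTop :=
    (tendsto_rpow_neg_nhdsGT_zero (neg_lt_zero.2 hθ)).const_mul_atTop hδ
  refine (((tendsto_exp_div_rpow_atTop θ⁻¹).comp hu).const_mul_atTop
    (rpow_pos_of_pos hδ θ⁻¹)).congr' ?_
  filter_upwards [self_mem_nhdsWithin] with r (hr : 0 < r)
  -- with `u = δ r^{-θ}` one has `r = δ^{1/θ} / u^{1/θ}`
  rw [Function.comp_apply, mul_rpow hδ.le (rpow_nonneg hr.le _), ← rpow_mul hr.le,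
    neg_mul, mul_inv_cancel₀ hθ.ne', rpow_neg_one]
  field_simp

theorem tendsto_exp_mul_rpow_neg_mul_min {δ θ c a : ℝ} (hδ : 0 < δ) (hθ : 0 < θ) (hc : 0 < c)
    (ha : 0 < a) :
    Tendsto (fun r => exp (δ * r ^ (-θ)) * (c * min 1 (r * a))) (𝓝[>] 0) atTop := by
  refine ((tendsto_exp_mul_rpow_neg_mul_self hδ hθ).atTop_mul_const (mul_pos hc ha)).congr' ?_
  filter_upwards [nhdsWithin_le_nhds (Iio_mem_nhds (one_div_pos.2 ha))] with r (hr : r < 1 / a)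
  rw [min_eq_right ((lt_div_iff₀ ha).1 hr).le]
  ring

namespace IsSubordinator

variable {Ω : Type*} [MeasurableSpace Ω] {μ : Measure Ω} [IsProbabilityMeasure μ]
  {S : ℝ → Ω → ℝ} {φ : ℝ → ℝ}

theorem one_sub_exp_neg_mul_measureReal_le (hsub : IsSubordinator μ S φ) {r t : ℝ}
    (hr : 0 ≤ r) (ht : 0 ≤ t) :
    (1 - exp (-t)) * μ.real {ω | t ≤ S r ω} ≤ 1 - exp (-(r * φ 1)) := by
  have hle_one : ∀ ω, exp (-(1 * S r ω)) ≤ 1 := fun ω =>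
    exp_le_one_iff.2 (by linarith [hsub.nonneg ω r hr])
  have hint : Integrable (fun ω => exp (-(1 * S r ω))) μ :=
    .of_bound (((hsub.measurable r).const_mul 1).neg.exp.aestronglyMeasurable) 1
      (ae_of_all _ fun ω => by rw [norm_of_nonneg (exp_pos _).le]; exact hle_one ω)
  calc (1 - exp (-t)) * μ.real {ω | t ≤ S r ω}
      ≤ (1 - exp (-t)) * μ.real {ω | 1 - exp (-t) ≤ 1 - exp (-(1 * S r ω))} := by
        refine mul_le_mul_of_nonneg_left (measureReal_mono fun ω (hω : t ≤ S r ω) => ?_)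
          (sub_nonneg.2 (exp_le_one_iff.2 (neg_nonpos.2 ht)))
        show 1 - exp (-t) ≤ 1 - exp (-(1 * S r ω))
        rw [one_mul]
        exact sub_le_sub_left (exp_le_exp.2 (neg_le_neg hω)) 1
    _ ≤ ∫ ω, (1 - exp (-(1 * S r ω))) ∂μ :=
        mul_meas_ge_le_integral_of_nonneg (ae_of_all _ fun ω => sub_nonneg.2 (hle_one ω))
          ((integrable_const 1).sub hint) _
    _ = 1 - exp (-(r * φ 1)) := by
        rw [integral_sub (integrable_const 1) hint, hsub.laplace 1 r one_pos hr]
        simp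

theorem ae_exists_pos_le (hsub : IsSubordinator μ S φ) {t : ℝ} (ht : 0 < t) :
    ∀ᵐ ω ∂μ, ∃ r > 0, S r ω ≤ t := by
  rw [ae_iff, ← measureReal_eq_zero_iff]
  push Not
  have hbound : Tendsto (fun r => (1 - exp (-(r * φ 1))) / (1 - exp (-t))) (𝓝[>] 0) (𝓝 0) := by
    have hcont : Continuous fun r => (1 - exp (-(r * φ 1))) / (1 - exp (-t)) := by fun_prop
    simpa using (hcont.tendsto 0).mono_left nhdsWithin_le_nhds
  refine le_antisymm (ge_of_tendsto hbound ?_) measureReal_nonneg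
  filter_upwards [self_mem_nhdsWithin] with r (hr : 0 < r)
  rw [le_div_iff₀' (sub_pos.2 (exp_lt_one_iff.2 (neg_lt_zero.2 ht)))]
  refine le_trans ?_ (hsub.one_sub_exp_neg_mul_measureReal_le hr.le ht.le)
  exact mul_le_mul_of_nonneg_left (measureReal_mono fun ω hω => (hω r hr).le)
    (sub_nonneg.2 (exp_le_one_iff.2 (neg_nonpos.2 ht.le)))

theorem exp_rpow_neg_mul_measure_lt_le_lintegral (hsub : IsSubordinator μ S φ) {r t θ δ : ℝ}
    (hr : 0 < r) (ht : 0 < t) (hθ : 0 < θ) (hδ : 0 ≤ δ) :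
    ENNReal.ofReal (exp (δ * r ^ (-θ))) * μ {ω | t < S r ω} ≤
      ∫⁻ ω, ENNReal.ofReal (exp (δ * (sInf {s : ℝ | 0 ≤ s ∧ t < S s ω}) ^ (-θ))) ∂μ := by
  have hmeas : MeasurableSet {ω | t < S r ω} :=
    measurableSet_lt measurable_const (hsub.measurable r)
  rw [← setLIntegral_const]
  refine (lintegral_mono_ae ?_).trans (setLIntegral_le_lintegral _ _)
  filter_upwards [ae_restrict_of_ae (hsub.ae_exists_pos_le ht), ae_restrict_mem hmeas]
    with ω ⟨r', hr', hSr'⟩ (hSr : t < S r ω)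
  obtain ⟨hr'Z, hZr⟩ := (hsub.mono ω).sInf_setOf_lt_mem_Icc hr'.le hSr' hr.le hSr
  exact ENNReal.ofReal_le_ofReal <| exp_le_exp.2 <| mul_le_mul_of_nonneg_left
    (rpow_le_rpow_of_nonpos (hr'.trans_le hr'Z) hZr (neg_nonpos.2 hθ.le)) hδ

end IsSubordinator

theorem exp_moment_inverse_stable_subordinator_infinite_general
    {Ω : Type*} [MeasurableSpace Ω] (μ : Measure Ω) [IsProbabilityMeasure μ]
    (S : ℝ → Ω → ℝ) (φ : ℝ → ℝ) (hsub : IsSubordinator μ S φ)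
    (α c : ℝ) (hc : 0 < c)
    (htail_lower : ∀ r > (0:ℝ), ∀ t > (0:ℝ),
      ENNReal.ofReal (c * min 1 (r * t ^ (-α))) ≤ μ {ω | t ≤ S r ω})
    (t θ δ : ℝ) (ht : 0 < t) (hθ : 0 < θ) (hδ : 0 < δ) :
    ∫⁻ ω, ENNReal.ofReal
        (Real.exp (δ * (sInf {s : ℝ | 0 ≤ s ∧ t < S s ω}) ^ (-θ))) ∂μ = ⊤ := by
  have ht1 : (0 : ℝ) < t + 1 := by linarith
  refine top_le_iff.1 (le_of_tendsto (ENNReal.tendsto_ofReal_atTop.comp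
    (tendsto_exp_mul_rpow_neg_mul_min hδ hθ hc (rpow_pos_of_pos ht1 (-α)))) ?_)
  filter_upwards [self_mem_nhdsWithin] with r (hr : 0 < r)
  rw [Function.comp_apply, ENNReal.ofReal_mul (exp_pos _).le]
  calc _ ≤ ENNReal.ofReal (exp (δ * r ^ (-θ))) * μ {ω | t + 1 ≤ S r ω} :=
        mul_le_mul_right (htail_lower r hr (t + 1) ht1) _
    _ ≤ ENNReal.ofReal (exp (δ * r ^ (-θ))) * μ {ω | t < S r ω} :=
        mul_le_mul_right (measure_mono fun ω hω => (lt_add_one t).trans_le hω) _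
    _ ≤ _ := hsub.exp_rpow_neg_mul_measure_lt_le_lintegral hr ht hθ hδ.le

/-- **Infinite exponential negative moments for inverse α-stable subordinators**
(Remark 3.8): if `S` is a strictly increasing subordinator whose tails satisfy
`P(S(r) ≥ t) ≥ c (1 ∧ r t^{−α})` for some `α ∈ (0,1)`, `c>0` (as holds for the α-stable
subordinator), and `Z(t) = S^{-1}(t) = inf{s ≥ 0 : S(s) > t}`, then for all `t>0`, `θ>0`
and `δ>0`, `E exp[δ Z(t)^{−θ}] = ∞`. -/
theorem exp_moment_inverse_stable_subordinator_infinite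
    {Ω : Type*} [MeasurableSpace Ω] (μ : Measure Ω) [IsProbabilityMeasure μ]
    (S : ℝ → Ω → ℝ) (φ : ℝ → ℝ) (hsub : IsSubordinator μ S φ)
    (hstrict : ∀ᵐ ω ∂μ, StrictMonoOn (fun t => S t ω) (Set.Ici 0))
    (α c : ℝ) (hα : α ∈ Set.Ioo (0:ℝ) 1) (hc : 0 < c)
    (htail_lower : ∀ r > (0:ℝ), ∀ t > (0:ℝ),
      ENNReal.ofReal (c * min 1 (r * t ^ (-α))) ≤ μ {ω | t ≤ S r ω})
    (t θ δ : ℝ) (ht : 0 < t) (hθ : 0 < θ) (hδ : 0 < δ) :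
    ∫⁻ ω, ENNReal.ofReal
        (Real.exp (δ * (sInf {s : ℝ | 0 ≤ s ∧ t < S s ω}) ^ (-θ))) ∂μ = ⊤ :=
  exp_moment_inverse_stable_subordinator_infinite_general μ S φ hsub α c hc htail_lower t θ δ ht hθ
    hδ

end
end
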